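/- The nine vectors η₁, η₂, η₃, η₄, η₅, η₆, η₇, η₈, η₉ are ℤ-linearly independent in ℂ⁶ (so the ℤ-submodule of ℂ⁶ they generate is free of rank 9). -/
import Mathlib


open Complex

/-- The basis vectors `η₁, …, η₉` of the range of the Chern–Connes character `𝐓₄`. -/
noncomputable def η (θ : ℝ) : Fin 9 → Fin 6 → ℂ :=
  ![![1/2, 0, 0, 1/2, 0, 0],
    ![1/2, (1 - I)/4, 0, 0, 0, 0],
    ![1/4, 1/4, 0, 1/4, 0, 0],
    ![1/2, 0, 0, 0, 1/2, 0],
    ![1/2, 0, (1 - I)/4, 0, 0, 0],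
    ![1/4, 0, 1/4, 0, 1/4, 0],
    ![(θ : ℂ)/4, (1 + I)/8, (1 + I)/8, 1/8, 1/8, 1/4],
    ![(θ : ℂ)/4, (-1 + I)/8, (-1 + I)/8, -(1/8), -(1/8), -(1/4)],
    ![(θ : ℂ)/4, (-1 - I)/8, (-1 - I)/8, 1/8, 1/8, 1/4]]

/-- The images `ξ₁′, …, ξ₆′` of the generators of `K₀(A_θ ⋊ ℤ₂)` under `𝐓₄ ∘ ι⋆`. -/
noncomputable def ξ' (θ : ℝ) : Fin 6 → Fin 6 → ℂ :=
  ![![1, 0, 0, 0, 0, 0],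
    ![1/2, 0, 0, 1/2, 0, 0],
    ![1/2, 0, 0, 0, 0, 1/2],
    ![1/2, 0, 0, 0, 0, 1/2],
    ![1/2, 0, 0, 0, 1/2, 0],
    ![(θ : ℂ)/2, 0, 0, 1/4, -(1/4), 0]]

set_option maxHeartbeats 1000000 in
/-- The nine vectors `η₁, …, η₉` are ℤ-linearly independent in ℂ⁶. -/
theorem eta_linearIndependent (θ : ℝ) (hθ : Irrational θ) :
    LinearIndependent ℤ (η θ) := by
  rw [Fintype.linearIndependent_iff]
  intro g hg i
  have h0 := congrFun hg 0
  have h1 := congrFun hg 1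
  have h2 := congrFun hg 2
  have h3 := congrFun hg 3
  have h4 := congrFun hg 4
  have h5 := congrFun hg 5
  simp [η, Fin.sum_univ_succ, show (5:Fin 6) = Fin.succ 4 from rfl,
    Matrix.cons_val_succ, Complex.ext_iff] at h0 h1 h2 h3 h4 h5
  obtain ⟨h1a, h1b⟩ := h1
  obtain ⟨h2a, h2b⟩ := h2
  -- the irrationality step: g 6 + g 7 + g 8 = 0
  have key : g 6 + g 7 + g 8 = 0 := by
    by_contra hn
    apply hθ
    refine ⟨(-(2 * g 0 + 2 * g 1 + g 2 + 2 * g 3 + 2 * g 4 + g 5) : ℚ) /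
      ((g 6 + g 7 + g 8 : ℤ) : ℚ), ?_⟩
    have hne : ((g 6 + g 7 + g 8 : ℤ) : ℝ) ≠ 0 := by exact_mod_cast hn
    push_cast
    push_cast at hne
    field_simp
    linarith [h0]
  have keyR : ((g 6 : ℝ)) + (g 7 : ℝ) + (g 8 : ℝ) = 0 := by exact_mod_cast key
  have h0' : 2 * (g 0 : ℝ) + 2 * (g 1 : ℝ) + (g 2 : ℝ) + 2 * (g 3 : ℝ) +
      2 * (g 4 : ℝ) + (g 5 : ℝ) = 0 := by
    linear_combination 4 * h0 - θ * keyR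
  have H0 : g 0 = 0 := by
    have : (g 0 : ℝ) = 0 := by linarith
    exact_mod_cast this
  have H1 : g 1 = 0 := by
    have : (g 1 : ℝ) = 0 := by linarith
    exact_mod_cast this
  have H2 : g 2 = 0 := by
    have : (g 2 : ℝ) = 0 := by linarith
    exact_mod_cast this
  have H3 : g 3 = 0 := by
    have : (g 3 : ℝ) = 0 := by linarith
    exact_mod_cast this
  have H4 : g 4 = 0 := by
    have : (g 4 : ℝ) = 0 := by linarith
    exact_mod_cast this
  have H5 : g 5 = 0 := by
    have : (g 5 : ℝ) = 0 := by linarith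
    exact_mod_cast this
  have H6 : g 6 = 0 := by
    have : (g 6 : ℝ) = 0 := by linarith
    exact_mod_cast this
  have H7 : g 7 = 0 := by
    have : (g 7 : ℝ) = 0 := by linarith
    exact_mod_cast this
  have H8 : g 8 = 0 := by
    have : (g 8 : ℝ) = 0 := by linarith
    exact_mod_cast this
  fin_cases i <;> assumption
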